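/- arXiv:2211.00781 — 2 statements merged into one kernel-verified Lean document; each statement's English description precedes it below -/
import Mathlib

section
/- Let L be a finite distributive lattice, f and g join-endomorphisms of L, and h : L → L a function satisfying: h(a) = f(a) ⊓ g(a) for every join-irreducible a and for a = ⊥, and h(a) = h(b) ⊔ h(c) whenever b, c are distinct elements covered by a. Then h is the greatest join-endomorphism below both f and g. -/
/-!
On a finite distributive lattice a join-endomorphism is determined by its values on
join-irreducibles, and any monotone assignment `u` on join-irreducibles extends to the
join-endomorphism `a ↦ ⨆ {u j | j join-irreducible, j ≤ a}`, because join-irreducibles are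
join-prime. Applied to `u = f ⊓ g` this extension is the greatest join-endomorphism below `f`
and `g`. The recursion for `h` determines `h` from its values on `⊥` and on join-irreducibles,
since every other element is the join of any two distinct elements it covers; so `h` is this
extension.
-/

def IsJoinEndo {L : Type*} [Lattice L] [OrderBot L] (f : L → L) : Prop :=
  f ⊥ = ⊥ ∧ ∀ a b, f (a ⊔ b) = f a ⊔ f b

namespace IsJoinEndo

variable {L : Type*} [Lattice L] [OrderBot L] {f : L → L}

def toSupBotHom (hf : IsJoinEndo f) : SupBotHom L L := ⟨⟨f, hf.2⟩, hf.1⟩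

theorem monotone (hf : IsJoinEndo f) : Monotone f := OrderHomClass.mono hf.toSupBotHom

theorem map_finset_sup {ι : Type*} (hf : IsJoinEndo f) (s : Finset ι) (u : ι → L) :
    f (s.sup u) = s.sup (f ∘ u) :=
  _root_.map_finset_sup hf.toSupBotHom s u

end IsJoinEndo

section CovBy

variable {L : Type*} [Lattice L] [Finite L]

theorem exists_ne_covBy_of_not_supIrred {a : L} (ha : ¬IsMin a) (hirr : ¬SupIrred a) :
    ∃ b c, b ⋖ a ∧ c ⋖ a ∧ b ≠ c := by
  obtain ⟨x, y, hxy, hxa, hya⟩ := (not_supIrred.1 hirr).resolve_left ha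
  obtain ⟨b, hxb, hba⟩ := exists_le_covBy_of_lt hxa
  obtain ⟨c, hyc, hca⟩ := exists_le_covBy_of_lt hya
  refine ⟨b, c, hba, hca, ?_⟩
  rintro rfl
  exact hba.lt.not_ge (hxy ▸ sup_le hxb hyc)

theorem eq_of_sup_of_covBy [OrderBot L] {h H : L → L} (hH : ∀ a b, H (a ⊔ b) = H a ⊔ H b)
    (h_bot : h ⊥ = H ⊥) (h_irr : ∀ a, SupIrred a → h a = H a)
    (h_cov : ∀ a b c : L, b ⋖ a → c ⋖ a → b ≠ c → h a = h b ⊔ h c) : h = H := by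
  funext a
  induction a using WellFoundedLT.induction with
  | ind a ih =>
    by_cases hmin : IsMin a
    · rwa [hmin.eq_bot]
    by_cases hirr : SupIrred a
    · exact h_irr a hirr
    obtain ⟨b, c, hba, hca, hbc⟩ := exists_ne_covBy_of_not_supIrred hmin hirr
    rw [h_cov a b c hba hca hbc, ih b hba.lt, ih c hca.lt, ← hH, hba.wcovBy.sup_eq hca.wcovBy hbc]

end CovBy

section SupIrredBelow

variable {L : Type*} [Lattice L] [Fintype L]

open Classical in
noncomputable def supIrredBelow (a : L) : Finset L := {j | SupIrred j ∧ j ≤ a}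

theorem mem_supIrredBelow {a j : L} : j ∈ supIrredBelow a ↔ SupIrred j ∧ j ≤ a := by
  simp [supIrredBelow]

theorem supIrredBelow_mono : Monotone (supIrredBelow : L → Finset L) :=
  fun _ _ hab _ hj =>
    mem_supIrredBelow.2 ⟨(mem_supIrredBelow.1 hj).1, (mem_supIrredBelow.1 hj).2.trans hab⟩

theorem supIrredBelow_sup_id [OrderBot L] (a : L) : (supIrredBelow a).sup id = a := by
  obtain ⟨s, rfl, hs⟩ := exists_supIrred_decomposition a
  refine le_antisymm (Finset.sup_le fun j hj => (mem_supIrredBelow.1 hj).2) (Finset.sup_le ?_)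
  exact fun j hj =>
    Finset.le_sup (f := id) (mem_supIrredBelow.2 ⟨hs hj, Finset.le_sup (f := id) hj⟩)

end SupIrredBelow

section SupIrredExtend

variable {L : Type*} [Lattice L] [OrderBot L] [Fintype L]

noncomputable def supIrredExtend (u : L → L) (a : L) : L := (supIrredBelow a).sup u

variable {u : L → L}

theorem le_supIrredExtend {a j : L} (hj : SupIrred j) (hja : j ≤ a) :
    u j ≤ supIrredExtend u a :=
  Finset.le_sup (mem_supIrredBelow.2 ⟨hj, hja⟩)

theorem supIrredExtend_le (hu : Monotone u) : supIrredExtend u ≤ u :=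
  fun _ => Finset.sup_le fun _ hj => hu (mem_supIrredBelow.1 hj).2

theorem supIrredExtend_of_supIrred (hu : Monotone u) {a : L} (ha : SupIrred a) :
    supIrredExtend u a = u a :=
  le_antisymm (supIrredExtend_le hu a) (le_supIrredExtend ha le_rfl)

theorem IsJoinEndo.le_supIrredExtend {h : L → L} (hh : IsJoinEndo h) (hhu : h ≤ u) :
    h ≤ supIrredExtend u := by
  intro a
  rw [← supIrredBelow_sup_id a, hh.map_finset_sup, supIrredBelow_sup_id]
  exact Finset.sup_mono_fun fun j _ => hhu j

end SupIrredExtend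

theorem isJoinEndo_supIrredExtend {L : Type*} [DistribLattice L] [OrderBot L] [Fintype L]
    {u : L → L} : IsJoinEndo (supIrredExtend u) := by
  refine ⟨(Finset.sup_eq_bot_iff _ _).2 fun j hj => ?_, fun a b => le_antisymm ?_ ?_⟩
  · obtain ⟨hj, hj_bot⟩ := mem_supIrredBelow.1 hj
    exact absurd (le_bot_iff.1 hj_bot) hj.ne_bot
  · refine Finset.sup_le fun j hj => ?_
    obtain ⟨hj, hjab⟩ := mem_supIrredBelow.1 hj
    rcases hj.supPrime.le_sup.1 hjab with hja | hjb
    · exact le_sup_of_le_left (le_supIrredExtend hj hja)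
    · exact le_sup_of_le_right (le_supIrredExtend hj hjb)
  · exact sup_le (Finset.sup_mono (supIrredBelow_mono le_sup_left))
      (Finset.sup_mono (supIrredBelow_mono le_sup_right))

theorem meet_characterization {L : Type*} [DistribLattice L] [OrderBot L] [Fintype L]
    (f g : L → L) (hf : IsJoinEndo f) (hg : IsJoinEndo g)
    (h : L → L)
    (h_irr : ∀ a : L, SupIrred a → h a = f a ⊓ g a)
    (h_bot : h ⊥ = f ⊥ ⊓ g ⊥)
    (h_cov : ∀ a b c : L, b ⋖ a → c ⋖ a → b ≠ c → h a = h b ⊔ h c) :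
    IsJoinEndo h ∧ h ≤ f ∧ h ≤ g ∧
      ∀ h' : L → L, IsJoinEndo h' → h' ≤ f → h' ≤ g → h' ≤ h := by
  have hmono : Monotone (f ⊓ g) := hf.monotone.inf hg.monotone
  have hH : IsJoinEndo (supIrredExtend (f ⊓ g)) := isJoinEndo_supIrredExtend
  obtain rfl : h = supIrredExtend (f ⊓ g) := by
    refine eq_of_sup_of_covBy hH.2 ?_ (fun a ha => ?_) h_cov
    · rw [h_bot, hf.1, hg.1, inf_idem, hH.1]
    · rw [h_irr a ha, supIrredExtend_of_supIrred hmono ha, Pi.inf_apply]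
  exact ⟨hH, (supIrredExtend_le hmono).trans inf_le_left,
    (supIrredExtend_le hmono).trans inf_le_right,
    fun h' hh' hh'f hh'g => hh'.le_supIrredExtend (le_inf hh'f hh'g)⟩
end

section
/- Let L be a finite lattice, S a finite set of join-endomorphisms of L, and h the greatest join-endomorphism below every element of S. Let σ : L → L satisfy σ ≥ h pointwise. If u, v ∈ L satisfy σ(u) ⊔ σ(v) ≰ σ(u ⊔ v), then the function σ' defined by σ'(u) = σ(u) ⊓ σ(u ⊔ v), σ'(v) = σ(v) ⊓ σ(u ⊔ v), and σ'(x) = σ(x) elsewhere, satisfies σ' ≥ h pointwise and σ' < σ in the pointwise order. -/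
theorem IsJoinEndo.monotone_s14 {L : Type*} [Lattice L] [OrderBot L] {f : L → L}
    (hf : IsJoinEndo f) : Monotone f := fun a b hab =>
  calc f a ≤ f a ⊔ f b := le_sup_left
    _ = f (a ⊔ b) := (hf.2 a b).symm
    _ = f b := by rw [sup_eq_right.mpr hab]

theorem Monotone.le_inf_of_le {L : Type*} [Lattice L] {h σ : L → L} (hh : Monotone h)
    (hσ : h ≤ σ) {x y : L} (hxy : x ≤ y) : h x ≤ σ x ⊓ σ y :=
  le_inf (hσ x) ((hh hxy).trans (hσ y))

section MeetUpdate

variable {L : Type*} [Lattice L] [DecidableEq L]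

def meetUpdate (σ : L → L) (u v : L) : L → L := fun x =>
  if x = u then σ u ⊓ σ (u ⊔ v)
  else if x = v then σ v ⊓ σ (u ⊔ v)
  else σ x

variable {σ : L → L} {u v : L}

theorem meetUpdate_apply_left : meetUpdate σ u v u = σ u ⊓ σ (u ⊔ v) := if_pos rfl

theorem meetUpdate_apply_right : meetUpdate σ u v v = σ v ⊓ σ (u ⊔ v) := by
  by_cases hvu : v = u
  · subst hvu
    exact meetUpdate_apply_left
  · simp [meetUpdate, hvu]

theorem meetUpdate_le : meetUpdate σ u v ≤ σ := fun x => by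
  unfold meetUpdate
  split_ifs with hu hv
  · exact hu ▸ inf_le_left
  · exact hv ▸ inf_le_left
  · exact le_rfl

theorem Monotone.le_meetUpdate {h : L → L} (hh : Monotone h) (hσ : h ≤ σ) :
    h ≤ meetUpdate σ u v := fun x => by
  unfold meetUpdate
  split_ifs with hu hv
  · exact hu ▸ hh.le_inf_of_le hσ le_sup_left
  · exact hv ▸ hh.le_inf_of_le hσ le_sup_right
  · exact hσ x

theorem meetUpdate_lt (huv : ¬ σ u ⊔ σ v ≤ σ (u ⊔ v)) : meetUpdate σ u v < σ := by
  refine meetUpdate_le.lt_of_ne fun heq => huv (sup_le ?_ ?_)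
  · have hu := congr_fun heq u
    rw [meetUpdate_apply_left] at hu
    exact inf_eq_left.mp hu
  · have hv := congr_fun heq v
    rw [meetUpdate_apply_right] at hv
    exact inf_eq_left.mp hv

end MeetUpdate

theorem gmeet_update_case2_general {L : Type*} [Lattice L] [OrderBot L] [DecidableEq L]
    (S : Set (L → L))
    (h : L → L)
    (hh : IsJoinEndo h ∧ (∀ f ∈ S, h ≤ f) ∧
      ∀ h' : L → L, IsJoinEndo h' → (∀ f ∈ S, h' ≤ f) → h' ≤ h)
    (σ : L → L) (hσ : h ≤ σ)
    (u v : L) (huv : ¬ σ u ⊔ σ v ≤ σ (u ⊔ v))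
    (σ' : L → L)
    (hσ' : σ' = fun x =>
      if x = u then σ u ⊓ σ (u ⊔ v)
      else if x = v then σ v ⊓ σ (u ⊔ v)
      else σ x) :
    h ≤ σ' ∧ σ' < σ := by
  subst hσ'
  exact ⟨hh.1.monotone_s14.le_meetUpdate hσ, meetUpdate_lt huv⟩

theorem gmeet_update_case2 {L : Type*} [Lattice L] [OrderBot L] [Fintype L] [DecidableEq L]
    (S : Set (L → L)) (hSfin : S.Finite) (hS : ∀ f ∈ S, IsJoinEndo f)
    (h : L → L)
    (hh : IsJoinEndo h ∧ (∀ f ∈ S, h ≤ f) ∧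
      ∀ h' : L → L, IsJoinEndo h' → (∀ f ∈ S, h' ≤ f) → h' ≤ h)
    (σ : L → L) (hσ : h ≤ σ)
    (u v : L) (huv : ¬ σ u ⊔ σ v ≤ σ (u ⊔ v))
    (σ' : L → L)
    (hσ' : σ' = fun x =>
      if x = u then σ u ⊓ σ (u ⊔ v)
      else if x = v then σ v ⊓ σ (u ⊔ v)
      else σ x) :
    h ≤ σ' ∧ σ' < σ :=
  gmeet_update_case2_general S h hh σ hσ u v huv σ' hσ'
end
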